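/- For every integer m ≥ 1 and every integer ℓ ≥ 0, the series ∑_{k ≥ 0} (k+1)^{(m)} · k^ℓ / 2^k converges (where x^{(m)} = x(x+1)···(x+m-1) is the rising factorial and 0^0 = 1) and r_{m,ℓ} = (1/(2^{m+1} · m!)) · ∑_{k ≥ 0} (k+1)^{(m)} · k^ℓ / 2^k. -/

import Mathlib

/-- `IsBPA m ℓ f` : `f` encodes a barred preferential arrangement of `[ℓ]` with `m` bars.
Each element of `[ℓ]` is assigned a section (one of the `m + 1` sections determined by the
`m` bars) together with a rank inside its section (ties are allowed: elements of the same
section with the same rank form a block); within each section the set of ranks actually used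
must be an initial segment `{0, …, t-1}`, so that `f` determines, for each section, an
ordered partition of the elements assigned to it into nonempty blocks. -/
def IsBPA (m ℓ : ℕ) (f : Fin ℓ → Fin (m + 1) × Fin ℓ) : Prop :=
  ∀ x : Fin ℓ, ∀ r : Fin ℓ, r < (f x).2 → ∃ y : Fin ℓ, (f y).1 = (f x).1 ∧ (f y).2 = r

instance (m ℓ : ℕ) : DecidablePred (IsBPA m ℓ) := fun f => by unfold IsBPA; infer_instance

/-- `bpa m ℓ` : the number of barred preferential arrangements of `[ℓ]` with `m` bars.
In particular `bpa 0 ℓ` is the number of preferential arrangements of `[ℓ]`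
(the Fubini / ordered Bell number `r_ℓ`). -/
def bpa (m ℓ : ℕ) : ℕ :=
  Fintype.card { f : Fin ℓ → Fin (m + 1) × Fin ℓ // IsBPA m ℓ f }

/-!
A barred preferential arrangement `f` is determined by its image together with `f` viewed as a
surjection onto that image. The image is a staircase `{(s, r) | r < t s}` in
`sections × ranks`, where `t s` is the number of blocks of section `s` and `j = ∑ t s ≤ ℓ`;
there are `C(m + j, m)` such `t`, so `r_{m,ℓ} = ∑_j C(m + j, m) · surj(ℓ, j)`, where
`surj(ℓ, j)` counts the surjections `[ℓ] → [j]`.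

Grouping maps `[ℓ] → [k]` by their image gives `k^ℓ = ∑_j C(k, j) · surj(ℓ, j)`, and
`(k + 1)^{(m)} = m! · C(k + m, m)`. Since `C(k + m, m) C(k, j) = C(m + j, m) C(k + m, m + j)`,
the negative binomial series gives
`∑_k C(k + m, m) C(k, j) x^k = C(m + j, m) x^j / (1 - x)^{m+j+1}`,
which is `2^{m+1} C(m + j, m)` at `x = 1/2`.
-/

open Finset Function

def surjCard (n k : ℕ) : ℕ := Fintype.card {σ : Fin n → Fin k // Surjective σ}

lemma surjCard_eq_zero_of_lt {n k : ℕ} (h : n < k) : surjCard n k = 0 := by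
  rw [surjCard, Fintype.card_eq_zero_iff]
  refine ⟨fun ⟨σ, hσ⟩ => ?_⟩
  have := Fintype.card_le_of_surjective σ hσ
  simp only [Fintype.card_fin] at this
  omega

lemma card_surjective_eq_surjCard {β : Type*} [Fintype β] [DecidableEq β] (n : ℕ) :
    Fintype.card {σ : Fin n → β // Surjective σ} = surjCard n (Fintype.card β) :=
  Fintype.card_congr <| (Equiv.arrowCongr (Equiv.refl _) (Fintype.equivFin β)).subtypeEquiv
    fun σ => (EquivLike.comp_surjective σ (Fintype.equivFin β)).symm

def imageEqEquivSurjective {ι α : Type*} [Fintype ι] [DecidableEq α] (S : Finset α) :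
    {f : ι → α // univ.image f = S} ≃ {σ : ι → S // Surjective σ} where
  toFun f := ⟨fun x => ⟨f.1 x, (Finset.ext_iff.1 f.2 _).1 (mem_image_of_mem _ (mem_univ x))⟩,
    fun a => by
      obtain ⟨x, -, hx⟩ := mem_image.1 ((Finset.ext_iff.1 f.2 a).2 a.2)
      exact ⟨x, Subtype.ext hx⟩⟩
  invFun σ := ⟨fun x => σ.1 x, by
    ext a
    simp only [mem_image, mem_univ, true_and]
    exact ⟨fun ⟨x, hx⟩ => hx ▸ (σ.1 x).2, fun ha => (σ.2 ⟨a, ha⟩).imp fun x hx => by rw [hx]⟩⟩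
  left_inv _ := rfl
  right_inv _ := rfl

lemma card_filter_image_eq {α : Type*} [Fintype α] [DecidableEq α] (n : ℕ) (S : Finset α) :
    #{f : Fin n → α | univ.image f = S} = surjCard n #S := by
  rw [← Fintype.card_subtype, Fintype.card_congr (imageEqEquivSurjective S),
    card_surjective_eq_surjCard, Fintype.card_coe]

lemma pow_eq_sum_choose_mul_surjCard (n k : ℕ) :
    k ^ n = ∑ j ∈ range (n + 1), k.choose j * surjCard n j := by
  have hfiber : k ^ n = ∑ S : Finset (Fin k), surjCard n #S := by
    rw [show k ^ n = #(univ : Finset (Fin n → Fin k)) by simp,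
      card_eq_sum_card_fiberwise (f := fun f : Fin n → Fin k => univ.image f)
        (t := univ) fun _ _ => mem_univ _]
    simp_rw [card_filter_image_eq]
  have hvanish : ∀ j, k < j ∨ n < j → k.choose j * surjCard n j = 0 := by
    rintro j (hj | hj)
    · rw [Nat.choose_eq_zero_of_lt hj, zero_mul]
    · rw [surjCard_eq_zero_of_lt hj, mul_zero]
  rw [hfiber, ← powerset_univ, sum_powerset_apply_card, card_univ, Fintype.card_fin]
  simp_rw [smul_eq_mul]
  rw [sum_subset (range_subset_range.2 (by omega : k + 1 ≤ k + n + 1))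
      fun j _ hj => hvanish j (.inl (by simpa using hj)),
    sum_subset (range_subset_range.2 (by omega : n + 1 ≤ k + n + 1))
      fun j _ hj => hvanish j (.inr (by simpa using hj))]

lemma card_piAntidiag_univ {ι : Type*} [Fintype ι] [DecidableEq ι] (n : ℕ) :
    #(piAntidiag (univ : Finset ι) n) = (Fintype.card ι + n - 1).choose n := by
  rw [← map_sym_eq_piAntidiag, card_map, sym_univ, card_univ, Sym.card_sym_eq_choose]

section staircase

variable {m ℓ : ℕ}

variable (ℓ) in
def staircase (t : Fin (m + 1) → ℕ) : Finset (Fin (m + 1) × Fin ℓ) := {p | (p.2 : ℕ) < t p.1}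

@[simp]
lemma mem_staircase {t : Fin (m + 1) → ℕ} {p : Fin (m + 1) × Fin ℓ} :
    p ∈ staircase ℓ t ↔ (p.2 : ℕ) < t p.1 := by
  simp [staircase]

lemma card_staircase {t : Fin (m + 1) → ℕ} (ht : ∀ s, t s ≤ ℓ) :
    #(staircase ℓ t) = ∑ s, t s := by
  rw [staircase, card_filter, Fintype.sum_prod_type]
  refine sum_congr rfl fun s _ => ?_
  rw [← card_filter]
  exact Fin.card_filter_val_lt.trans (min_eq_right (ht s))

lemma staircase_injective {t t' : Fin (m + 1) → ℕ} (ht : ∀ s, t s ≤ ℓ) (ht' : ∀ s, t' s ≤ ℓ)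
    (h : staircase ℓ t = staircase ℓ t') : t = t' := by
  funext s
  by_contra hne
  have hlt : min (t s) (t' s) < ℓ := by have := ht s; have := ht' s; omega
  have := Finset.ext_iff.1 h (s, ⟨_, hlt⟩)
  simp only [mem_staircase] at this
  omega

lemma isBPA_of_image_eq_staircase {f : Fin ℓ → Fin (m + 1) × Fin ℓ} {t : Fin (m + 1) → ℕ}
    (h : univ.image f = staircase ℓ t) : IsBPA m ℓ f := by
  intro x r hr
  have hx : f x ∈ staircase ℓ t := h ▸ mem_image_of_mem f (mem_univ x)
  have hr' : ((f x).1, r) ∈ univ.image f := by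
    rw [h, mem_staircase]
    exact lt_trans hr (mem_staircase.1 hx)
  obtain ⟨y, -, hy⟩ := mem_image.1 hr'
  exact ⟨y, by rw [hy], by rw [hy]⟩

def blockCount (f : Fin ℓ → Fin (m + 1) × Fin ℓ) (s : Fin (m + 1)) : ℕ :=
  sup {x | (f x).1 = s} fun x => (f x).2 + 1

lemma blockCount_le (f : Fin ℓ → Fin (m + 1) × Fin ℓ) (s : Fin (m + 1)) :
    blockCount f s ≤ ℓ :=
  Finset.sup_le fun x _ => (f x).2.isLt

lemma IsBPA.image_eq_staircase {f : Fin ℓ → Fin (m + 1) × Fin ℓ} (hf : IsBPA m ℓ f) :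
    univ.image f = staircase ℓ (blockCount f) := by
  ext ⟨s, r⟩
  simp only [mem_image, mem_univ, true_and, mem_staircase, blockCount, Finset.lt_sup_iff,
    mem_filter]
  constructor
  · rintro ⟨x, hx⟩
    exact ⟨x, congrArg Prod.fst hx, by simp [hx]⟩
  · rintro ⟨x, rfl, hrx⟩
    rcases (Nat.lt_succ_iff.1 hrx).lt_or_eq with hlt | heq
    · obtain ⟨y, hy1, hy2⟩ := hf x r hlt
      exact ⟨y, Prod.ext hy1 hy2⟩
    · exact ⟨x, Prod.ext rfl (Fin.ext heq.symm)⟩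

lemma isBPA_iff_exists_image_eq_staircase {f : Fin ℓ → Fin (m + 1) × Fin ℓ} :
    IsBPA m ℓ f ↔ ∃ t : Fin (m + 1) → ℕ, ∑ s, t s ≤ ℓ ∧ univ.image f = staircase ℓ t := by
  refine ⟨fun hf => ⟨blockCount f, ?_, hf.image_eq_staircase⟩,
    fun ⟨t, _, h⟩ => isBPA_of_image_eq_staircase h⟩
  rw [← card_staircase (blockCount_le f), ← hf.image_eq_staircase]
  simpa using card_image_le (s := univ) (f := f)

end staircase

theorem bpa_eq_sum_choose_mul_surjCard (m ℓ : ℕ) :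
    bpa m ℓ = ∑ j ∈ range (ℓ + 1), (m + j).choose m * surjCard ℓ j := by
  set T := (range (ℓ + 1)).sigma fun j => piAntidiag (univ : Finset (Fin (m + 1))) j
  have hT : ∀ jt ∈ T, ∑ s, jt.2 s = jt.1 ∧ jt.1 ≤ ℓ := fun jt hjt => by
    simp only [T, mem_sigma, mem_range, mem_piAntidiag] at hjt
    exact ⟨hjt.2.1, by omega⟩
  have hle : ∀ jt ∈ T, ∀ s, jt.2 s ≤ ℓ := fun jt hjt s =>
    ((single_le_sum (fun _ _ => Nat.zero_le _) (mem_univ s)).trans (hT jt hjt).1.le).trans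
      (hT jt hjt).2
  have hsplit : ({f | IsBPA m ℓ f} : Finset (Fin ℓ → Fin (m + 1) × Fin ℓ)) =
      T.biUnion fun jt => {f | univ.image f = staircase ℓ jt.2} := by
    ext f
    simp [isBPA_iff_exists_image_eq_staircase, T]
  have hdisj : (T : Set ((_ : ℕ) × (Fin (m + 1) → ℕ))).PairwiseDisjoint
      fun jt => ({f | univ.image f = staircase ℓ jt.2} :
        Finset (Fin ℓ → Fin (m + 1) × Fin ℓ)) := by
    intro jt hjt jt' hjt' hne
    refine disjoint_left.2 fun f hf hf' => hne ?_
    simp only [mem_filter, mem_univ, true_and] at hf hf'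
    have ht := staircase_injective (hle jt hjt) (hle jt' hjt') (hf.symm.trans hf')
    exact Sigma.ext ((hT jt hjt).1.symm.trans (ht ▸ (hT jt' hjt').1)) (heq_of_eq ht)
  rw [bpa, Fintype.card_subtype, hsplit, card_biUnion hdisj, sum_sigma]
  refine sum_congr rfl fun j hj => ?_
  have hfiber : ∀ t ∈ piAntidiag univ j,
      #({f | univ.image f = staircase ℓ t} : Finset (Fin ℓ → Fin (m + 1) × Fin ℓ)) =
        surjCard ℓ j := fun t ht => by
    have hjt : (⟨j, t⟩ : (_ : ℕ) × (Fin (m + 1) → ℕ)) ∈ T := mem_sigma.2 ⟨hj, ht⟩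
    rw [card_filter_image_eq, card_staircase (hle _ hjt), (hT _ hjt).1]
  rw [sum_congr rfl hfiber, sum_const, card_piAntidiag_univ, Fintype.card_fin, smul_eq_mul,
    Nat.add_right_comm, Nat.add_sub_cancel, Nat.choose_symm_add]

lemma hasSum_choose_mul_choose_mul_geometric {𝕜 : Type*} [NormedField 𝕜] (m j : ℕ) {r : 𝕜}
    (hr : ‖r‖ < 1) :
    HasSum (fun k : ℕ => ((k + m).choose m * k.choose j : 𝕜) * r ^ k)
      ((m + j).choose m * r ^ j / (1 - r) ^ (m + j + 1)) := by
  have hhead : ∑ k ∈ range j, ((k + m).choose m * k.choose j : 𝕜) * r ^ k = 0 :=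
    sum_eq_zero fun k hk => by rw [Nat.choose_eq_zero_of_lt (mem_range.1 hk)]; simp
  rw [← hasSum_nat_add_iff' j, hhead, sub_zero, div_eq_mul_one_div]
  refine ((hasSum_choose_mul_geometric_of_norm_lt_one (m + j) hr).mul_left
    ((m + j).choose m * r ^ j)).congr_fun fun k => ?_
  have hchoose := Nat.choose_mul (n := k + j + m) (Nat.le_add_right m j)
  rw [Nat.add_sub_cancel, Nat.add_sub_cancel_left] at hchoose
  rw [← Nat.cast_mul, ← hchoose, show k + j + m = k + (m + j) by ring]
  push_cast
  ring

lemma hasSum_ascFactorial_mul_pow_div_two_pow (m ℓ : ℕ) :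
    HasSum (fun k : ℕ => ((k + 1).ascFactorial m : ℝ) * (k : ℝ) ^ ℓ / 2 ^ k)
      (2 ^ (m + 1) * m.factorial * bpa m ℓ) := by
  have hterm : ∀ k : ℕ, ((k + 1).ascFactorial m : ℝ) * (k : ℝ) ^ ℓ / 2 ^ k =
      ∑ j ∈ range (ℓ + 1), (m.factorial * surjCard ℓ j : ℝ) *
        (((k + m).choose m * k.choose j : ℝ) * (1 / 2) ^ k) := fun k => by
    rw [Nat.ascFactorial_eq_factorial_mul_choose, ← Nat.cast_pow,
      pow_eq_sum_choose_mul_surjCard ℓ k]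
    push_cast
    rw [mul_sum, sum_div]
    refine sum_congr rfl fun j _ => ?_
    rw [div_pow, one_pow]
    field_simp
  have hvalue : ∑ j ∈ range (ℓ + 1), (m.factorial * surjCard ℓ j : ℝ) *
      ((m + j).choose m * (1 / 2) ^ j / (1 - 1 / 2) ^ (m + j + 1)) =
        2 ^ (m + 1) * m.factorial * bpa m ℓ := by
    rw [bpa_eq_sum_choose_mul_surjCard]
    push_cast
    rw [mul_sum]
    refine sum_congr rfl fun j _ => ?_
    rw [show (1 : ℝ) - 1 / 2 = 1 / 2 by norm_num]
    simp only [one_div, inv_pow]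
    field_simp
    ring
  rw [← hvalue, funext hterm]
  have hhalf : ‖(1 / 2 : ℝ)‖ < 1 := by rw [Real.norm_of_nonneg (by norm_num)]; norm_num
  exact hasSum_sum fun j _ =>
    (hasSum_choose_mul_choose_mul_geometric m j hhalf).mul_left (m.factorial * surjCard ℓ j : ℝ)

theorem bpa_eq_infinite_series_general (m ℓ : ℕ) :
    Summable (fun k : ℕ => ((k + 1).ascFactorial m : ℝ) * (k : ℝ) ^ ℓ / 2 ^ k) ∧
      (bpa m ℓ : ℝ) =
        (1 / (2 ^ (m + 1) * (Nat.factorial m : ℝ))) *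
          ∑' k : ℕ, ((k + 1).ascFactorial m : ℝ) * (k : ℝ) ^ ℓ / 2 ^ k := by
  have h := hasSum_ascFactorial_mul_pow_div_two_pow m ℓ
  refine ⟨h.summable, ?_⟩
  rw [h.tsum_eq, one_div, inv_mul_cancel_left₀ (by positivity)]

/-- For every `m ≥ 1` and `ℓ ≥ 0`, the series
`∑_{k ≥ 0} (k+1)^{(m)} · k^ℓ / 2^k` converges (where `x^{(m)} = x(x+1)⋯(x+m-1)` is the
rising factorial and `0^0 = 1`), and
`r_{m,ℓ} = (1/(2^{m+1} · m!)) · ∑_{k ≥ 0} (k+1)^{(m)} · k^ℓ / 2^k`. -/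
theorem bpa_eq_infinite_series (m ℓ : ℕ) (hm : 1 ≤ m) :
    Summable (fun k : ℕ => ((k + 1).ascFactorial m : ℝ) * (k : ℝ) ^ ℓ / 2 ^ k) ∧
      (bpa m ℓ : ℝ) =
        (1 / (2 ^ (m + 1) * (Nat.factorial m : ℝ))) *
          ∑' k : ℕ, ((k + 1).ascFactorial m : ℝ) * (k : ℝ) ^ ℓ / 2 ^ k :=
  bpa_eq_infinite_series_general m ℓ
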